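/- arXiv:1011.1377 — 6 statements merged into one kernel-verified Lean document; each statement's English description precedes it below -/
import Mathlib

section
/- Let a regular linear network error correction code over a finite field F with information rate w be given on a network G, and let t be a sink node with 1 ≤ w ≤ C_t. Let {e_1, e_2, ..., e_{C_t}} be a minimum cut between s and t, indexed in an upstream-to-downstream order (i.e., for i < j there is no path starting with the channel e_j that contains the channel e_i), and let ρ = {e_w, e_{w+1}, ..., e_{C_t}}. Then Δ(t,ρ) ∩ Φ(t) ≠ {0}. -/
open scoped BigOperators

/-- Consecutive channels in the list match head-to-tail. -/
def ChainsTo {E V : Type} (tl hd : E → V) (p : List E) : Prop :=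
  List.Chain' (fun a b => hd a = tl b) p

/-- `p` is a (nonempty) path from node `i` to node `t`. -/
def IsPathBetween {E V : Type} (tl hd : E → V) (i t : V) (p : List E) : Prop :=
  ChainsTo tl hd p ∧ (∃ e ∈ p.head?, tl e = i) ∧ (∃ e ∈ p.getLast?, hd e = t)

/-- `C` is a cut between `i` and `t`: every path from `i` to `t` meets `C`. -/
def IsCut {E V : Type} (tl hd : E → V) (i t : V) (C : Finset E) : Prop :=
  ∀ p : List E, IsPathBetween tl hd i t p → ∃ e ∈ p, e ∈ C

/-- The minimum cut capacity between `i` and `t`. -/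
noncomputable def minCutGen {E V : Type} (tl hd : E → V) (i t : V) : ℕ :=
  sInf {n | ∃ C : Finset E, IsCut tl hd i t C ∧ C.card = n}

/-- A single-source finite acyclic directed multigraph network. -/
structure Network where
  V : Type
  E : Type
  [fintV : Fintype V]
  [fintE : Fintype E]
  [decV : DecidableEq V]
  [decE : DecidableEq E]
  tl : E → V
  hd : E → V
  s : V
  T : Finset V
  s_not_sink : s ∉ T
  source_no_in : ∀ e, hd e ≠ s
  sink_no_out : ∀ e, tl e ∉ T
  acyclic : ∀ p : List E, ChainsTo tl hd p →
    ∀ e ∈ p.head?, ∀ e' ∈ p.getLast?, hd e' ≠ tl e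

attribute [instance] Network.fintV Network.fintE Network.decV Network.decE

namespace Network

/-- The minimum cut capacity `C_t` between the source `s` and `t`. -/
noncomputable def minCut (G : Network) (t : G.V) : ℕ :=
  minCutGen G.tl G.hd G.s t

/-- `rank_t(ρ)`: the minimum cut capacity between the new node `s_ρ` (= `none`) and `t`
in the network where every channel of `ρ` is redirected to start at `s_ρ`. -/
noncomputable def rankOf (G : Network) (t : G.V) (ρ : Finset G.E) : ℕ :=
  minCutGen (fun e => if e ∈ ρ then (none : Option G.V) else some (G.tl e))
    (fun e => some (G.hd e)) (none : Option G.V) (some t)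

/-- `R_t(b)`: the set of error patterns `ρ` with `|ρ| = rank_t(ρ) = b`. -/
def R (G : Network) (t : G.V) (b : ℕ) : Set (Finset G.E) :=
  {ρ | ρ.card = b ∧ G.rankOf t ρ = b}

/-- `E_t`: the set of channels connective with `t`, i.e. from which a path ends at `t`. -/
def Econn (G : Network) (t : G.V) : Set G.E :=
  {e | ∃ p : List G.E, ChainsTo G.tl G.hd p ∧ p.head? = some e ∧
        ∃ e' ∈ p.getLast?, G.hd e' = t}

/-- `|J|`: the number of internal nodes. -/
noncomputable def internalCard (G : Network) : ℕ :=
  (Finset.univ \ insert G.s G.T).card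

end Network

/-- A linear network error correction code for information rate `w`: local encoding
coefficients together with the extended global encoding kernels `f`, which satisfy the
defining recursion.  The coordinates of the kernels are indexed by `In(s) ∪ E`,
where `In(s)` consists of the `w` imaginary message channels. -/
structure NECCode (G : Network) (F : Type) [Field F] (w : ℕ) where
  k : G.E → G.E → F
  ksrc : Fin w → G.E → F
  f : G.E → (Fin w ⊕ G.E) → F
  f_eq : ∀ e : G.E,
    f e = (∑ d ∈ Finset.univ.filter (fun d => G.hd d = G.tl e), k d e • f d)
      + (if G.tl e = G.s then
          ∑ i : Fin w, ksrc i e • (Pi.single (Sum.inl i) (1 : F) : (Fin w ⊕ G.E) → F)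
         else 0)
      + (Pi.single (Sum.inr e) (1 : F) : (Fin w ⊕ G.E) → F)

namespace NECCode

variable {G : Network} {F : Type} [Field F] {w : ℕ}

/-- `row_t(d)`: the row of the decoding matrix `F̃_t` indexed by `d ∈ In(s) ∪ E`. -/
def rowt (C : NECCode G F w) (t : G.V) (d : Fin w ⊕ G.E) : {e : G.E // G.hd e = t} → F :=
  fun e => C.f e.1 d

/-- The message space `Φ(t)`. -/
def Phi (C : NECCode G F w) (t : G.V) : Submodule F ({e : G.E // G.hd e = t} → F) :=
  Submodule.span F (Set.range fun i : Fin w => C.rowt t (Sum.inl i))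

/-- The error space `Δ(t, ρ)` of the error pattern `ρ`. -/
def Delta (C : NECCode G F w) (t : G.V) (ρ : Finset G.E) :
    Submodule F ({e : G.E // G.hd e = t} → F) :=
  Submodule.span F ((fun d => C.rowt t (Sum.inr d)) '' (ρ : Set G.E))

/-- A code is regular if `dim Φ(t) = w` for every sink node. -/
def Regular (C : NECCode G F w) : Prop :=
  ∀ t ∈ G.T, Module.finrank F (C.Phi t) = w

/-- The minimum distance `d_min^{(t)}` at the sink node `t`. -/
noncomputable def dmin (C : NECCode G F w) (t : G.V) : ℕ :=
  sInf {n | ∃ ρ : Finset G.E, G.rankOf t ρ = n ∧ C.Delta t ρ ⊓ C.Phi t ≠ ⊥}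

end NECCode

/- Unrolling the recursion of the kernels until it reaches the cut shows that every message
row `row_t(d_i')` is a combination of the error rows `row_t(e_j)`: the remainder only collects
contributions along paths from `s` to `t` avoiding the cut, and there are none.
Hence `Φ(t) ≤ Δ(t, ρ) ⊔ Δ(t, σ)`, where `σ = {e_1, …, e_{w-1}}`. If `Δ(t, ρ) ⊓ Φ(t) = 0`,
then `dim Δ(t, ρ) + w ≤ dim Δ(t, ρ) + |σ| ≤ dim Δ(t, ρ) + w - 1`, a contradiction. -/

theorem ChainsTo.append_singleton {E V : Type} {tl hd : E → V} {p : List E} {d e : E}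
    (hp : ChainsTo tl hd p) (hlast : p.getLast? = some d) (hde : hd d = tl e) :
    ChainsTo tl hd (p ++ [e]) :=
  List.IsChain.append hp (List.isChain_singleton e) (by simp_all)

namespace Network

variable (G : Network)

def inChannels (v : G.V) : Finset G.E :=
  Finset.univ.filter fun d => G.hd d = v

theorem wellFounded_feeds : WellFounded fun d e : G.E => G.hd d = G.tl e := by
  have path_of_transGen : ∀ a b, Relation.TransGen (fun d e : G.E => G.hd d = G.tl e) a b →
      ∃ p : List G.E, ChainsTo G.tl G.hd p ∧ p.head? = some a ∧
        ∃ c, p.getLast? = some c ∧ G.hd c = G.tl b := by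
    intro a b h
    induction h with
    | single h => exact ⟨[a], List.isChain_singleton a, rfl, a, rfl, h⟩
    | @tail b c _ hbc ih =>
      obtain ⟨p, hp, hhead, d, hlast, hdb⟩ := ih
      refine ⟨p ++ [b], hp.append_singleton hlast hdb, ?_, b, List.getLast?_concat, hbc⟩
      cases p <;> simp_all
  have : Std.Irrefl (Relation.TransGen fun d e : G.E => G.hd d = G.tl e) := ⟨fun a h => by
    obtain ⟨p, hp, hhead, c, hlast, hc⟩ := path_of_transGen a a h
    exact G.acyclic p hp a hhead c hlast hc⟩
  exact Subrelation.wf (r := Relation.TransGen fun d e : G.E => G.hd d = G.tl e)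
    (fun h => .single h) (Finite.wellFounded_of_trans_of_irrefl _)

def ReachableAvoiding (K : Finset G.E) (e : G.E) : Prop :=
  ∃ p : List G.E, ChainsTo G.tl G.hd p ∧ (∃ a ∈ p.head?, G.tl a = G.s) ∧
    p.getLast? = some e ∧ ∀ a ∈ p, a ∉ K

end Network

namespace NECCode

variable {G : Network} {F : Type} [Field F] {w : ℕ} (C : NECCode G F w)

theorem f_inl_eq (i : Fin w) (e : G.E) :
    C.f e (.inl i) = ∑ d ∈ G.inChannels (G.tl e), C.k d e * C.f d (.inl i)
      + if G.tl e = G.s then C.ksrc i e else 0 := by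
  simpa [Network.inChannels, Finset.sum_apply, Pi.single_apply,
    apply_ite (fun g : Fin w ⊕ G.E → F => g (.inl i))] using congrFun (C.f_eq e) (.inl i)

theorem f_inr_eq (c e : G.E) :
    C.f e (.inr c) = ∑ d ∈ G.inChannels (G.tl e), C.k d e * C.f d (.inr c)
      + if c = e then 1 else 0 := by
  simpa [Network.inChannels, Finset.sum_apply, Pi.single_apply,
    apply_ite (fun g : Fin w ⊕ G.E → F => g (.inr c))] using congrFun (C.f_eq e) (.inr c)

theorem sum_mul_f_inr_eq (K : Finset G.E) (a : G.E → F) (e : G.E) :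
    ∑ c ∈ K, a c * C.f e (.inr c) =
      ∑ d ∈ G.inChannels (G.tl e), C.k d e * ∑ c ∈ K, a c * C.f d (.inr c)
        + if e ∈ K then a e else 0 := by
  simp_rw [C.f_inr_eq _ e, mul_add, Finset.sum_add_distrib, Finset.mul_sum, mul_ite, mul_one,
    mul_zero, Finset.sum_ite_eq']
  rw [Finset.sum_comm]
  simp only [mul_left_comm]

/-- `g e` is the gain of message `i` at `e` along the paths from `s` that meet `K` at most
in `e`. -/
def IsGainAvoiding (K : Finset G.E) (i : Fin w) (g : G.E → F) : Prop :=
  ∀ e, g e = ∑ d ∈ G.inChannels (G.tl e), C.k d e * (if d ∈ K then 0 else g d)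
    + if G.tl e = G.s then C.ksrc i e else 0

theorem exists_isGainAvoiding (K : Finset G.E) (i : Fin w) :
    ∃ g, C.IsGainAvoiding K i g := by
  refine ⟨G.wellFounded_feeds.fix fun e rec =>
    ∑ d ∈ (G.inChannels (G.tl e)).attach,
      C.k d e * (if d.1 ∈ K then 0 else rec d (Finset.mem_filter.mp d.2).2)
    + if G.tl e = G.s then C.ksrc i e else 0, fun e => ?_⟩
  rw [WellFounded.fix_eq, ← Finset.sum_attach (G.inChannels (G.tl e))]

variable {C} {K : Finset G.E} {i : Fin w} {g : G.E → F}

theorem IsGainAvoiding.f_inl_eq (hg : C.IsGainAvoiding K i g) (e : G.E) :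
    C.f e (.inl i) = (if e ∈ K then 0 else g e) + ∑ c ∈ K, g c * C.f e (.inr c) := by
  induction e using G.wellFounded_feeds.induction with
  | _ e ih =>
  have ih' : ∀ d ∈ G.inChannels (G.tl e), ∑ c ∈ K, g c * C.f d (.inr c) =
      C.f d (.inl i) - if d ∈ K then 0 else g d := fun d hd => by
    rw [ih d (Finset.mem_filter.mp hd).2]; ring
  rw [C.sum_mul_f_inr_eq, Finset.sum_congr rfl fun d hd => by rw [ih' d hd]]
  simp only [mul_sub, Finset.sum_sub_distrib]
  rw [C.f_inl_eq i e, hg e]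
  split_ifs <;> ring

theorem IsGainAvoiding.eq_zero (hg : C.IsGainAvoiding K i g) {e : G.E} (he : e ∉ K)
    (hreach : ¬ G.ReachableAvoiding K e) : g e = 0 := by
  induction e using G.wellFounded_feeds.induction with
  | _ e ih =>
  have hsrc : G.tl e ≠ G.s := fun hs =>
    hreach ⟨[e], List.isChain_singleton e, ⟨e, rfl, hs⟩, rfl, by simpa using he⟩
  rw [hg e, if_neg hsrc, add_zero]
  refine Finset.sum_eq_zero fun d hd => ?_
  have hde : G.hd d = G.tl e := (Finset.mem_filter.mp hd).2
  by_cases hdK : d ∈ K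
  · rw [if_pos hdK, mul_zero]
  rw [if_neg hdK, ih d hde hdK ?_, mul_zero]
  rintro ⟨p, hp, ⟨a, ha, has⟩, hlast, hfree⟩
  refine hreach ⟨p ++ [e], hp.append_singleton hlast hde, ⟨a, ?_, has⟩, List.getLast?_concat,
    ?_⟩
  · cases p <;> simp_all
  · simp only [List.mem_append, List.mem_singleton]
    rintro a (ha | rfl)
    exacts [hfree a ha, he]

variable (C)

theorem rowt_inl_mem_Delta_of_isCut {t : G.V} (hK : IsCut G.tl G.hd G.s t K) (i : Fin w) :
    C.rowt t (.inl i) ∈ C.Delta t K := by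
  obtain ⟨g, hg⟩ := C.exists_isGainAvoiding K i
  have hrow : C.rowt t (.inl i) = ∑ c ∈ K, g c • C.rowt t (.inr c) := by
    funext ⟨e, het⟩
    simp only [rowt, Finset.sum_apply, Pi.smul_apply, smul_eq_mul]
    rw [hg.f_inl_eq e, add_eq_right, ite_eq_left_iff]
    refine fun heK => hg.eq_zero heK ?_
    rintro ⟨p, hp, hs, hlast, hfree⟩
    obtain ⟨x, hx, hxK⟩ := hK p ⟨hp, hs, e, hlast, het⟩
    exact hfree x hx hxK
  rw [hrow]
  exact Submodule.sum_mem _ fun c hc => Submodule.smul_mem _ _ (Submodule.subset_span ⟨c, hc, rfl⟩)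

theorem Phi_le_Delta_of_isCut {t : G.V} (hK : IsCut G.tl G.hd G.s t K) :
    C.Phi t ≤ C.Delta t K :=
  Submodule.span_le.mpr <| Set.range_subset_iff.mpr (C.rowt_inl_mem_Delta_of_isCut hK)

theorem Delta_union (t : G.V) (ρ σ : Finset G.E) :
    C.Delta t (ρ ∪ σ) = C.Delta t ρ ⊔ C.Delta t σ := by
  rw [Delta, Finset.coe_union, Set.image_union, Submodule.span_union, Delta, Delta]

theorem finrank_Delta_le_card (t : G.V) (ρ : Finset G.E) :
    Module.finrank F (C.Delta t ρ) ≤ ρ.card := by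
  classical
  rw [Delta, ← Finset.coe_image]
  exact (finrank_span_finset_le_card _).trans Finset.card_image_le

end NECCode

theorem Submodule.inf_ne_bot_of_le_sup_of_finrank_lt {K V : Type*} [DivisionRing K]
    [AddCommGroup V] [Module K V] [FiniteDimensional K V] {A B P : Submodule K V}
    (hP : P ≤ A ⊔ B) (hB : Module.finrank K B < Module.finrank K P) : A ⊓ P ≠ ⊥ := by
  intro hAP
  have hsup := Submodule.finrank_sup_add_finrank_inf_eq A P
  rw [hAP, finrank_bot, add_zero] at hsup
  have : Module.finrank K (A ⊔ P : Submodule K V) ≤ Module.finrank K (A ⊔ B : Submodule K V) :=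
    Submodule.finrank_mono (sup_le le_sup_left hP)
  have := Submodule.finrank_add_le_finrank_add_finrank A B
  omega

theorem Fin.card_filter_not_le_val_add_one_lt {n w : ℕ} (hw : 1 ≤ w) :
    (Finset.univ.filter fun i : Fin n => ¬ w ≤ (i : ℕ) + 1).card < w := by
  rw [Finset.filter_congr (q := fun i : Fin n => (i : ℕ) < w - 1) (by intros; omega),
    Fin.card_filter_val_lt]
  omega

theorem statement0_general (G : Network) (F : Type) [Field F] (w : ℕ)
    (C : NECCode G F w) (hreg : C.Regular) (hw1 : 1 ≤ w)
    (t : G.V) (ht : t ∈ G.T)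
    (e : Fin (G.minCut t) → G.E)
    (hcut : IsCut G.tl G.hd G.s t (Finset.univ.image e)) :
    C.Delta t ((Finset.univ.filter fun i : Fin (G.minCut t) => w ≤ (i : ℕ) + 1).image e)
      ⊓ C.Phi t ≠ ⊥ := by
  set ρ := (Finset.univ.filter fun i : Fin (G.minCut t) => w ≤ (i : ℕ) + 1).image e
  set σ := (Finset.univ.filter fun i : Fin (G.minCut t) => ¬ w ≤ (i : ℕ) + 1).image e
  have hPhi : C.Phi t ≤ C.Delta t ρ ⊔ C.Delta t σ := by
    rw [← C.Delta_union, ← Finset.image_union, Finset.filter_union_filter_not_eq]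
    exact C.Phi_le_Delta_of_isCut hcut
  have hσ : Module.finrank F (C.Delta t σ) < Module.finrank F (C.Phi t) :=
    calc Module.finrank F (C.Delta t σ) ≤ σ.card := C.finrank_Delta_le_card t σ
      _ < w := Finset.card_image_le.trans_lt (Fin.card_filter_not_le_val_add_one_lt hw1)
      _ = Module.finrank F (C.Phi t) := (hreg t ht).symm
  exact Submodule.inf_ne_bot_of_le_sup_of_finrank_lt hPhi hσ

theorem statement0 (G : Network) (F : Type) [Field F] [Fintype F] (w : ℕ)
    (C : NECCode G F w) (hreg : C.Regular) (hw1 : 1 ≤ w)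
    (t : G.V) (ht : t ∈ G.T) (hwC : w ≤ G.minCut t)
    (e : Fin (G.minCut t) → G.E) (hinj : Function.Injective e)
    (hcut : IsCut G.tl G.hd G.s t (Finset.univ.image e))
    (horder : ∀ i j : Fin (G.minCut t), i < j →
      ∀ p : List G.E, ChainsTo G.tl G.hd p → p.head? = some (e j) → e i ∉ p) :
    C.Delta t ((Finset.univ.filter fun i : Fin (G.minCut t) => w ≤ (i : ℕ) + 1).image e)
      ⊓ C.Phi t ≠ ⊥ :=
  statement0_general G F w C hreg hw1 t ht e hcut
end

section
/- Let G be a network, t a sink node, and w an information rate with 1 ≤ w ≤ C_t; set δ_t = C_t − w. Then for any error pattern ρ with |ρ| = rank_t(ρ) = δ_t, there exist w + δ_t pairwise channel-disjoint paths ending at t such that exactly δ_t of these paths start with the δ_t distinct channels of ρ, and the remaining w paths are paths from the source node s to t. -/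
open scoped BigOperators

/-!
Add to the network of `rank_t(ρ)`, where the channels of `ρ` start at a new node `s_ρ`, `w`
parallel channels from `s_ρ` to `s`. A cut between `s_ρ` and `t` in this network either contains
all `w` new channels, and then its remaining channels cut `s_ρ` from `t` in the network of
`rank_t(ρ)`, or it misses one of them, and then its remaining channels cut `s` from `t` in `G`.
So every such cut has at least `min (w + rank_t(ρ)) C_t = w + δ_t` channels, and by Menger's
theorem there are `w + δ_t` channel-disjoint paths from `s_ρ` to `t`. Their first channels are
distinct and leave `s_ρ`; as only `|ρ| + w = δ_t + w` channels leave `s_ρ`, each of them starts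
one of the paths. Dropping the new channels gives the required paths.

Menger's theorem comes from max-flow min-cut for flows given by sets of channels: a maximum flow
has no augmenting path, so the channels leaving the set of nodes reachable in its residual network
form a cut of size at most its value, and a flow of value `k` splits into `k` disjoint paths.
-/

open Relation
open scoped symmDiff

theorem Finset.sum_symmDiff {ι M : Type} [DecidableEq ι] [AddCommGroup M] (F P : Finset ι)
    (f : ι → M) :
    ∑ e ∈ F ∆ P, f e = ∑ e ∈ F, f e + ∑ e ∈ P, if e ∈ F then -f e else f e := by
  have hU : ∀ S ⊆ F ∪ P, ∀ g : ι → M,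
      ∑ e ∈ S, g e = ∑ e ∈ F ∪ P, if e ∈ S then g e else 0 :=
    fun S hS g => by rw [Finset.sum_ite_mem, Finset.inter_eq_right.mpr hS]
  rw [hU _ Finset.symmDiff_subset_union, hU F Finset.subset_union_left,
    hU P Finset.subset_union_right, ← Finset.sum_add_distrib]
  refine Finset.sum_congr rfl fun e _ => ?_
  by_cases hF : e ∈ F <;> by_cases hP : e ∈ P <;> simp [Finset.mem_symmDiff, hF, hP]

theorem List.mem_filterMap_getLeft? {α β : Type} {l : List (α ⊕ β)} {x : α} :
    x ∈ l.filterMap Sum.getLeft? ↔ Sum.inl x ∈ l := by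
  simp [List.mem_filterMap]

theorem exists_head?_eq_of_pairwise_disjoint {α : Type} {k : ℕ} {P : Fin k → List α}
    (hdisj : Pairwise fun i j => (P i).Disjoint (P j)) {S : Finset α}
    (hS : ∀ j, ∃ x ∈ S, (P j).head? = some x) (hk : S.card ≤ k) :
    ∀ x ∈ S, ∃ j, (P j).head? = some x := by
  choose h hhS hh using hS
  have hinj : Set.InjOn h (Finset.univ : Finset (Fin k)) := fun i _ j _ hij => by
    by_contra hne
    exact hdisj hne (List.mem_of_mem_head? (hh i)) (hij ▸ List.mem_of_mem_head? (hh j))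
  intro x hx
  obtain ⟨j, -, rfl⟩ := Finset.surjOn_of_injOn_of_card_le h (fun j _ => hhS j) hinj
    (by simpa using hk) hx
  exact ⟨j, hh j⟩

section Paths

variable {E V : Type} {tl hd : E → V}

theorem chainsTo_iff_isChain {p : List E} :
    ChainsTo tl hd p ↔ List.IsChain (fun a b => hd a = tl b) p :=
  Iff.rfl

theorem not_isPathBetween_nil {a b : V} : ¬ IsPathBetween tl hd a b [] := by
  simp [IsPathBetween]

theorem isPathBetween_cons_iff {a b : V} {e : E} {p : List E} :
    IsPathBetween tl hd a b (e :: p) ↔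
      tl e = a ∧ (p = [] ∧ hd e = b ∨ IsPathBetween tl hd (hd e) b p) := by
  rcases p with _ | ⟨f, p⟩
  · simp [IsPathBetween, chainsTo_iff_isChain]
  · simp [IsPathBetween, chainsTo_iff_isChain, List.isChain_cons_cons, List.getLast?_cons_cons]
    tauto

theorem IsPathBetween.induction {Q : V → Prop} {a b : V} {p : List E}
    (hp : IsPathBetween tl hd a b p) (ha : Q a) (hstep : ∀ e ∈ p, Q (tl e) → Q (hd e)) :
    Q b := by
  induction p generalizing a with
  | nil => exact absurd hp not_isPathBetween_nil
  | cons e p ih =>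
    obtain ⟨rfl, ⟨-, rfl⟩ | hp⟩ := isPathBetween_cons_iff.mp hp
    · exact hstep e (by simp) ha
    · exact ih hp (hstep e (by simp) ha) fun f hf => hstep f (by simp [hf])

theorem isPathBetween_map {E' : Type} (f : E' → E) {a b : V} {p : List E'} :
    IsPathBetween tl hd a b (p.map f) ↔ IsPathBetween (tl ∘ f) (hd ∘ f) a b p := by
  induction p generalizing a with
  | nil => simp [not_isPathBetween_nil]
  | cons e p ih => simp [isPathBetween_cons_iff, ih]

end Paths

section Reach

variable {E V : Type} {tl hd : E → V}

def ChannelAdj (tl hd : E → V) (S : Set E) (u v : V) : Prop :=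
  ∃ e ∈ S, tl e = u ∧ hd e = v

theorem IsPathBetween.of_append_cons {a b : V} {p q : List E} {e : E}
    (h : IsPathBetween tl hd a b (p ++ e :: q)) : IsPathBetween tl hd (tl e) b (e :: q) := by
  induction p generalizing a with
  | nil => obtain ⟨rfl, -⟩ := isPathBetween_cons_iff.mp h; exact h
  | cons f p ih =>
    obtain ⟨-, ⟨h, -⟩ | h⟩ := isPathBetween_cons_iff.mp h
    · simp at h
    · exact ih h

theorem exists_nodup_path_of_transGen {S : Set E} {a b : V}
    (h : TransGen (ChannelAdj tl hd S) a b) :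
    ∃ p : List E, p.Nodup ∧ IsPathBetween tl hd a b p ∧ ∀ e ∈ p, e ∈ S := by
  induction h using TransGen.head_induction_on with
  | single hab =>
    obtain ⟨e, he, rfl, rfl⟩ := hab
    exact ⟨[e], by simp, isPathBetween_cons_iff.mpr ⟨rfl, .inl ⟨rfl, rfl⟩⟩, by simpa⟩
  | head hac _ ih =>
    obtain ⟨e, he, rfl, rfl⟩ := hac
    obtain ⟨q, hnd, hq, hqS⟩ := ih
    by_cases heq : e ∈ q
    · -- cut the cycle through `e`
      obtain ⟨q₁, q₂, rfl⟩ := List.append_of_mem heq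
      exact ⟨e :: q₂, hnd.sublist (List.sublist_append_right _ _), hq.of_append_cons,
        fun f hf => hqS f (List.mem_append_right _ hf)⟩
    · exact ⟨e :: q, List.nodup_cons.mpr ⟨heq, hnd⟩,
        isPathBetween_cons_iff.mpr ⟨rfl, .inr hq⟩, by simpa [he] using hqS⟩

theorem IsCut.not_transGen {C : Finset E} {a b : V} (hC : IsCut tl hd a b C) :
    ¬ TransGen (ChannelAdj tl hd (↑C)ᶜ) a b := fun h => by
  obtain ⟨p, -, hp, hpC⟩ := exists_nodup_path_of_transGen h
  obtain ⟨e, he, heC⟩ := hC p hp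
  exact hpC e he heC

theorem minCutGen_le_card {C : Finset E} {a b : V} (hC : IsCut tl hd a b C) :
    minCutGen tl hd a b ≤ C.card :=
  Nat.sInf_le ⟨C, hC, rfl⟩

end Reach

section Flow

variable {E V : Type} [DecidableEq V] {tl hd : E → V}

def edgeExcess (tl hd : E → V) (v : V) (e : E) : ℤ :=
  (if hd e = v then 1 else 0) - (if tl e = v then 1 else 0)

def excess (tl hd : E → V) (F : Finset E) (v : V) : ℤ :=
  ∑ e ∈ F, edgeExcess tl hd v e

def IsFlow (tl hd : E → V) (s t : V) (F : Finset E) : Prop :=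
  ∀ v, v ≠ s → v ≠ t → excess tl hd F v = 0

theorem IsPathBetween.sum_map_edgeExcess {a b : V} {p : List E}
    (hp : IsPathBetween tl hd a b p) (v : V) :
    (p.map (edgeExcess tl hd v)).sum = (if b = v then 1 else 0) - (if a = v then 1 else 0) := by
  induction p generalizing a with
  | nil => exact absurd hp not_isPathBetween_nil
  | cons e p ih =>
    obtain ⟨rfl, ⟨rfl, rfl⟩ | hp⟩ := isPathBetween_cons_iff.mp hp
    · simp [edgeExcess]
    · rw [List.map_cons, List.sum_cons, ih hp, edgeExcess]
      ring

theorem IsPathBetween.excess_toFinset [DecidableEq E] {a b : V} {p : List E}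
    (hp : IsPathBetween tl hd a b p) (hnd : p.Nodup) (v : V) :
    excess tl hd p.toFinset v = (if b = v then 1 else 0) - (if a = v then 1 else 0) := by
  rw [excess, List.sum_toFinset _ hnd, hp.sum_map_edgeExcess]

theorem excess_sdiff [DecidableEq E] {F P : Finset E} (h : P ⊆ F) (v : V) :
    excess tl hd (F \ P) v = excess tl hd F v - excess tl hd P v :=
  Finset.sum_sdiff_eq_sub h

theorem sum_excess (R : Finset V) (F : Finset E) :
    ∑ v ∈ R, excess tl hd F v =
      ∑ e ∈ F, ((if hd e ∈ R then 1 else 0) - (if tl e ∈ R then 1 else 0)) := by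
  simp only [excess]
  rw [Finset.sum_comm]
  simp [edgeExcess, Finset.sum_sub_distrib]

theorem IsFlow.sum_excess_eq {s t : V} {F : Finset E} (hF : IsFlow tl hd s t F)
    {R : Finset V} (hs : s ∈ R) (ht : t ∉ R) :
    ∑ v ∈ R, excess tl hd F v = excess tl hd F s :=
  Finset.sum_eq_single_of_mem s hs fun v hv hvs => hF v hvs (ne_of_mem_of_not_mem hv ht)

theorem IsFlow.exists_path [Fintype V] [DecidableEq E] {s t : V} {F : Finset E}
    (hF : IsFlow tl hd s t F) (hst : s ≠ t) (hval : excess tl hd F s < 0) :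
    ∃ p : List E, p.Nodup ∧ IsPathBetween tl hd s t p ∧ ∀ e ∈ p, e ∈ F := by
  classical
  set R := Finset.univ.filter fun v => ReflTransGen (ChannelAdj tl hd ↑F) s v
  have hsR : s ∈ R := by simp [R, ReflTransGen.refl]
  have hclosed : ∀ e ∈ F, tl e ∈ R → hd e ∈ R := fun e he h => by
    simp only [R, Finset.mem_filter, Finset.mem_univ, true_and] at h ⊢
    exact h.tail ⟨e, he, rfl, rfl⟩
  suffices htR : t ∈ R by
    simp only [R, Finset.mem_filter, Finset.mem_univ, true_and,
      reflTransGen_iff_eq_or_transGen] at htR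
    exact exists_nodup_path_of_transGen (htR.resolve_left hst.symm)
  by_contra htR
  -- no channel of `F` leaves `R`, so the total excess of `R` is nonnegative
  have hnonneg : 0 ≤ ∑ v ∈ R, excess tl hd F v := by
    rw [sum_excess]
    refine Finset.sum_nonneg fun e he => ?_
    by_cases h : tl e ∈ R
    · simp [h, hclosed e he h]
    · simp only [h, if_false]; split_ifs <;> norm_num
  rw [hF.sum_excess_eq hsR htR] at hnonneg
  omega

theorem IsFlow.sdiff_path [DecidableEq E] {s t : V} {F : Finset E} {p : List E}
    (hF : IsFlow tl hd s t F) (hst : s ≠ t) (hp : IsPathBetween tl hd s t p) (hnd : p.Nodup)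
    (hpF : ∀ e ∈ p, e ∈ F) :
    IsFlow tl hd s t (F \ p.toFinset) ∧
      excess tl hd (F \ p.toFinset) s = excess tl hd F s + 1 := by
  have hsub : p.toFinset ⊆ F := fun e he => hpF e (List.mem_toFinset.mp he)
  refine ⟨fun v hvs hvt => ?_, ?_⟩
  · rw [excess_sdiff hsub, hp.excess_toFinset hnd, hF v hvs hvt,
      if_neg (Ne.symm hvt), if_neg (Ne.symm hvs)]
    rfl
  · rw [excess_sdiff hsub, hp.excess_toFinset hnd, if_neg hst.symm, if_pos rfl]
    ring

theorem IsFlow.exists_disjoint_paths [Fintype V] [DecidableEq E] {s t : V} {F : Finset E}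
    (hF : IsFlow tl hd s t F) (hst : s ≠ t) {k : ℕ} (hk : excess tl hd F s ≤ -k) :
    ∃ P : Fin k → List E, (∀ i, IsPathBetween tl hd s t (P i) ∧ ∀ e ∈ P i, e ∈ F) ∧
      Pairwise fun i j => (P i).Disjoint (P j) := by
  induction k generalizing F with
  | zero => exact ⟨Fin.elim0, fun i => i.elim0, fun i => i.elim0⟩
  | succ k ih =>
    obtain ⟨p, hnd, hp, hpF⟩ := hF.exists_path hst (by omega)
    obtain ⟨hF', hval'⟩ := hF.sdiff_path hst hp hnd hpF
    obtain ⟨P, hP, hPdisj⟩ := ih hF' (by omega)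
    have hpP : ∀ i, ∀ e ∈ P i, e ∈ F ∧ e ∉ p := fun i e he => by
      simpa using (hP i).2 e he
    refine ⟨Fin.cons p P,
      Fin.cases ⟨hp, hpF⟩ fun i => ⟨(hP i).1, fun e he => (hpP i e he).1⟩,
      pairwise_fin_succ_iff.mpr ⟨fun i e he he' => ?_, fun i e he he' => ?_, hPdisj⟩⟩
    · exact (hpP i e (by simpa using he)).2 (by simpa using he')
    · exact (hpP i e (by simpa using he')).2 (by simpa using he)

end Flow

section Residual

variable {E V : Type} [DecidableEq E] [DecidableEq V] {tl hd : E → V}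

def residualTl (tl hd : E → V) (F : Finset E) (e : E) : V := if e ∈ F then hd e else tl e

def residualHd (tl hd : E → V) (F : Finset E) (e : E) : V := if e ∈ F then tl e else hd e

theorem edgeExcess_residual (F : Finset E) (v : V) (e : E) :
    edgeExcess (residualTl tl hd F) (residualHd tl hd F) v e =
      if e ∈ F then -edgeExcess tl hd v e else edgeExcess tl hd v e := by
  unfold edgeExcess residualTl residualHd
  split_ifs <;> ring

theorem excess_symmDiff (F P : Finset E) (v : V) :
    excess tl hd (F ∆ P) v =
      excess tl hd F v + excess (residualTl tl hd F) (residualHd tl hd F) P v := by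
  simp only [excess, edgeExcess_residual, Finset.sum_symmDiff]

theorem IsFlow.symmDiff_augmenting {s t : V} {F : Finset E} {p : List E}
    (hF : IsFlow tl hd s t F) (hst : s ≠ t)
    (hp : IsPathBetween (residualTl tl hd F) (residualHd tl hd F) s t p) (hnd : p.Nodup) :
    IsFlow tl hd s t (F ∆ p.toFinset) ∧
      excess tl hd (F ∆ p.toFinset) s = excess tl hd F s - 1 := by
  refine ⟨fun v hvs hvt => ?_, ?_⟩
  · rw [excess_symmDiff, hp.excess_toFinset hnd, hF v hvs hvt,
      if_neg (Ne.symm hvt), if_neg (Ne.symm hvs)]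
    rfl
  · rw [excess_symmDiff, hp.excess_toFinset hnd, if_neg hst.symm, if_pos rfl]
    ring

end Residual

section MaxFlowMinCut

variable {E V : Type} [Fintype E] [DecidableEq E] [DecidableEq V] {tl hd : E → V}

def leavingChannels (tl hd : E → V) (R : Finset V) : Finset E :=
  Finset.univ.filter fun e => tl e ∈ R ∧ hd e ∉ R

theorem isCut_leavingChannels {s t : V} {R : Finset V} (hs : s ∈ R) (ht : t ∉ R) :
    IsCut tl hd s t (leavingChannels tl hd R) := by
  intro p hp
  by_contra! hpR
  refine ht (hp.induction hs fun e he htl => ?_)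
  by_contra hhd
  exact hpR e he (by simp [leavingChannels, htl, hhd])

theorem IsFlow.card_leavingChannels_le {s t : V} {F : Finset E} (hF : IsFlow tl hd s t F)
    {R : Finset V} (hs : s ∈ R) (ht : t ∉ R)
    (hclosed : ∀ e, residualTl tl hd F e ∈ R → residualHd tl hd F e ∈ R) :
    ((leavingChannels tl hd R).card : ℤ) ≤ -excess tl hd F s := by
  have hforward : ∀ e ∉ F, tl e ∈ R → hd e ∈ R := fun e he => by
    simpa [residualTl, residualHd, he] using hclosed e
  have hbackward : ∀ e ∈ F, hd e ∈ R → tl e ∈ R := fun e he => by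
    simpa [residualTl, residualHd, he] using hclosed e
  have hsub : leavingChannels tl hd R ⊆ F := fun e he => by
    simp only [leavingChannels, Finset.mem_filter, Finset.mem_univ, true_and] at he
    by_contra heF
    exact he.2 (hforward e heF he.1)
  rw [← hF.sum_excess_eq hs ht, sum_excess, ← Finset.sum_neg_distrib]
  calc ((leavingChannels tl hd R).card : ℤ)
      = ∑ e ∈ leavingChannels tl hd R,
          -((if hd e ∈ R then 1 else 0) - (if tl e ∈ R then 1 else 0)) := by
        rw [Finset.card_eq_sum_ones, Nat.cast_sum]
        refine Finset.sum_congr rfl fun e he => ?_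
        simp only [leavingChannels, Finset.mem_filter, Finset.mem_univ, true_and] at he
        simp [he.1, he.2]
    _ ≤ _ := by
        refine Finset.sum_le_sum_of_subset_of_nonneg hsub fun e he _ => ?_
        by_cases hhd : hd e ∈ R
        · simp [hhd, hbackward e he hhd]
        · simp only [hhd, if_false]; split_ifs <;> norm_num

theorem exists_disjoint_paths_of_le_card_cut [Fintype V] {s t : V} (hst : s ≠ t) {k : ℕ}
    (hcut : ∀ C : Finset E, IsCut tl hd s t C → k ≤ C.card) :
    ∃ P : Fin k → List E, (∀ i, IsPathBetween tl hd s t (P i)) ∧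
      Pairwise fun i j => (P i).Disjoint (P j) := by
  classical
  obtain ⟨F, hFmem, hFmin⟩ := Finset.exists_min_image (Finset.univ.filter (IsFlow tl hd s t))
    (fun F => excess tl hd F s) ⟨∅, by simp [IsFlow, excess]⟩
  have hF : IsFlow tl hd s t F := (Finset.mem_filter.mp hFmem).2
  set R := Finset.univ.filter fun v =>
    ReflTransGen (ChannelAdj (residualTl tl hd F) (residualHd tl hd F) Set.univ) s v
  have hsR : s ∈ R := by simp [R, ReflTransGen.refl]
  have hclosed : ∀ e, residualTl tl hd F e ∈ R → residualHd tl hd F e ∈ R := fun e h => by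
    simp only [R, Finset.mem_filter, Finset.mem_univ, true_and] at h ⊢
    exact h.tail ⟨e, trivial, rfl, rfl⟩
  -- a maximum flow admits no augmenting path
  have htR : t ∉ R := fun htR => by
    simp only [R, Finset.mem_filter, Finset.mem_univ, true_and,
      reflTransGen_iff_eq_or_transGen] at htR
    obtain ⟨p, hnd, hp, -⟩ := exists_nodup_path_of_transGen (htR.resolve_left hst.symm)
    obtain ⟨hF', hval'⟩ := hF.symmDiff_augmenting hst hp hnd
    have := hFmin _ (Finset.mem_filter.mpr ⟨Finset.mem_univ _, hF'⟩)
    omega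
  have hk : (k : ℤ) ≤ -excess tl hd F s :=
    (Nat.cast_le.mpr (hcut _ (isCut_leavingChannels hsR htR))).trans
      (hF.card_leavingChannels_le hsR htR hclosed)
  obtain ⟨P, hP, hPdisj⟩ := hF.exists_disjoint_paths hst (k := k) (by omega)
  exact ⟨P, fun i => (hP i).1, hPdisj⟩

end MaxFlowMinCut

namespace Network

variable (G : Network) (ρ : Finset G.E) (w : ℕ)

/-- The network of `rankOf t ρ` (whose new node `s_ρ` is `none`) extended by `w` channels `inr i`
from `s_ρ` to `s`: tails here, heads in `extHd`. -/
def extTl : G.E ⊕ Fin w → Option G.V :=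
  Sum.elim (fun e => if e ∈ ρ then none else some (G.tl e)) fun _ => none

def extHd : G.E ⊕ Fin w → Option G.V :=
  Sum.elim (fun e => some (G.hd e)) fun _ => some G.s

variable {G ρ w}

theorem extTl_eq_none_iff {x : G.E ⊕ Fin w} :
    G.extTl ρ w x = none ↔ x ∈ ρ.disjSum Finset.univ := by
  rcases x with e | i <;> simp [extTl]

theorem extTl_inl_eq_some {e : G.E} {u : G.V} :
    G.extTl ρ w (.inl e) = some u ↔ e ∉ ρ ∧ G.tl e = u := by
  by_cases heρ : e ∈ ρ <;> simp [extTl, heρ]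

theorem add_rankOf_le_card_of_isCut_ext {t : G.V} {C : Finset (G.E ⊕ Fin w)}
    (hC : IsCut (G.extTl ρ w) (G.extHd w) none (some t) C) (hall : ∀ i, Sum.inr i ∈ C) :
    w + G.rankOf t ρ ≤ C.card := by
  set B := Finset.univ.filter fun e => Sum.inl e ∈ C
  have hB : IsCut (fun e => if e ∈ ρ then none else some (G.tl e)) (fun e => some (G.hd e))
      none (some t) B := fun p hp => by
    obtain ⟨x, hx, hxC⟩ := hC (p.map Sum.inl) ((isPathBetween_map Sum.inl).mpr hp)
    obtain ⟨e, he, rfl⟩ := List.mem_map.mp hx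
    exact ⟨e, he, by simpa [B] using hxC⟩
  have hsub : B.disjSum Finset.univ ⊆ C := fun x hx => by
    rcases x with e | i
    · simpa [B] using hx
    · exact hall i
  have hcard := Finset.card_le_card hsub
  rw [Finset.card_disjSum, Finset.card_univ, Fintype.card_fin] at hcard
  have hrank : G.rankOf t ρ ≤ B.card := minCutGen_le_card hB
  omega

theorem minCut_le_card_of_isCut_ext {t : G.V} {C : Finset (G.E ⊕ Fin w)}
    (hC : IsCut (G.extTl ρ w) (G.extHd w) none (some t) C) {i : Fin w} (hi : Sum.inr i ∉ C) :
    G.minCut t ≤ C.card := by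
  set B := Finset.univ.filter fun e => Sum.inl e ∈ C
  have hB : IsCut G.tl G.hd G.s t B := fun p hp => by
    by_contra! hpB
    -- follow `p` in the extended network, entering it through the channel `inr i`
    have hreach : ReflTransGen (ChannelAdj (G.extTl ρ w) (G.extHd w) (↑C)ᶜ) none (some t) :=
      hp.induction (Q := fun v => ReflTransGen _ none (some v))
        (.single ⟨.inr i, hi, rfl, rfl⟩) fun e he hreach => by
          refine ReflTransGen.tail (b := G.extTl ρ w (.inl e)) ?_
            ⟨.inl e, by simpa [B] using hpB e he, rfl, rfl⟩
          by_cases heρ : e ∈ ρ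
          · rw [show G.extTl ρ w (.inl e) = none from if_pos heρ]
          · rwa [show G.extTl ρ w (.inl e) = some (G.tl e) from if_neg heρ]
    exact hC.not_transGen ((reflTransGen_iff_eq_or_transGen.mp hreach).resolve_left
      (Option.some_ne_none t))
  exact (minCutGen_le_card hB).trans <|
    Finset.card_le_card_of_injOn Sum.inl (fun e he => by simpa [B] using he)
      Sum.inl_injective.injOn

theorem card_le_of_isCut_ext {t : G.V} {C : Finset (G.E ⊕ Fin w)}
    (hC : IsCut (G.extTl ρ w) (G.extHd w) none (some t) C) :
    min (w + G.rankOf t ρ) (G.minCut t) ≤ C.card := by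
  by_cases hall : ∀ i, Sum.inr i ∈ C
  · exact min_le_of_left_le (add_rankOf_le_card_of_isCut_ext hC hall)
  · obtain ⟨i, hi⟩ := not_forall.mp hall
    exact min_le_of_right_le (minCut_le_card_of_isCut_ext hC hi)

theorem isPathBetween_filterMap_getLeft_of_ext {u t : G.V} {r : List (G.E ⊕ Fin w)}
    (h : IsPathBetween (G.extTl ρ w) (G.extHd w) (some u) (some t) r) :
    IsPathBetween G.tl G.hd u t (r.filterMap Sum.getLeft?) := by
  induction r generalizing u with
  | nil => exact absurd h not_isPathBetween_nil
  | cons x r ih =>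
    obtain ⟨htl, hr⟩ := isPathBetween_cons_iff.mp h
    rcases x with e | i
    · obtain ⟨-, htl⟩ := extTl_inl_eq_some.mp htl
      rw [List.filterMap_cons_some (f := Sum.getLeft?) rfl, isPathBetween_cons_iff]
      exact ⟨htl, hr.imp (fun ⟨hr, hhd⟩ => ⟨by simp [hr], Option.some.inj hhd⟩) ih⟩
    · exact absurd htl (by simp [extTl])

theorem isPathBetween_of_ext_inl {t : G.V} {p : List (G.E ⊕ Fin w)} {e : G.E}
    (hp : IsPathBetween (G.extTl ρ w) (G.extHd w) none (some t) p)
    (he : p.head? = some (.inl e)) :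
    IsPathBetween G.tl G.hd (G.tl e) t (p.filterMap Sum.getLeft?) ∧
      (p.filterMap Sum.getLeft?).head? = some e := by
  obtain ⟨r, rfl⟩ := List.head?_eq_some_iff.mp he
  rw [List.filterMap_cons_some (f := Sum.getLeft?) rfl, isPathBetween_cons_iff]
  refine ⟨⟨rfl, ?_⟩, rfl⟩
  obtain ⟨-, ⟨rfl, hhd⟩ | hr⟩ := isPathBetween_cons_iff.mp hp
  · exact .inl ⟨rfl, Option.some.inj hhd⟩
  · exact .inr (isPathBetween_filterMap_getLeft_of_ext hr)

theorem isPathBetween_of_ext_inr {t : G.V} (hst : G.s ≠ t) {p : List (G.E ⊕ Fin w)} {i : Fin w}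
    (hp : IsPathBetween (G.extTl ρ w) (G.extHd w) none (some t) p)
    (hi : p.head? = some (.inr i)) :
    IsPathBetween G.tl G.hd G.s t (p.filterMap Sum.getLeft?) := by
  obtain ⟨r, rfl⟩ := List.head?_eq_some_iff.mp hi
  rw [List.filterMap_cons_none rfl]
  obtain ⟨-, ⟨-, hhd⟩ | hr⟩ := isPathBetween_cons_iff.mp hp
  · exact absurd (Option.some.inj hhd) hst
  · exact isPathBetween_filterMap_getLeft_of_ext hr

end Network

theorem statement4_general (G : Network) (t : G.V) (ht : t ∈ G.T) (w : ℕ)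
    (hwC : w ≤ G.minCut t)
    (ρ : Finset G.E) (hρ : ρ ∈ G.R t (G.minCut t - w)) :
    ∃ (P1 : {e : G.E // e ∈ ρ} → List G.E) (P2 : Fin w → List G.E),
      (∀ e, ChainsTo G.tl G.hd (P1 e) ∧ (P1 e).head? = some e.1 ∧
        ∃ e' ∈ (P1 e).getLast?, G.hd e' = t) ∧
      (∀ j, IsPathBetween G.tl G.hd G.s t (P2 j)) ∧
      (∀ e e', e ≠ e' → ∀ x ∈ P1 e, x ∉ P1 e') ∧
      (∀ j j', j ≠ j' → ∀ x ∈ P2 j, x ∉ P2 j') ∧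
      (∀ e j, ∀ x ∈ P1 e, x ∉ P2 j) := by
  obtain ⟨hcard, hrank⟩ := hρ
  have hst : G.s ≠ t := fun h => G.s_not_sink (h ▸ ht)
  obtain ⟨P, hP, hdisj⟩ := exists_disjoint_paths_of_le_card_cut (tl := G.extTl ρ w)
    (hd := G.extHd w) (Option.some_ne_none t).symm (k := w + (G.minCut t - w)) fun C hC => by
      have := Network.card_le_of_isCut_ext hC
      omega
  have hheads := exists_head?_eq_of_pairwise_disjoint hdisj (S := ρ.disjSum Finset.univ)
    (fun j => by
      obtain ⟨x, hx, hxtl⟩ := (hP j).2.1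
      exact ⟨x, Network.extTl_eq_none_iff.mp hxtl, hx⟩)
    (by rw [Finset.card_disjSum, Finset.card_univ, Fintype.card_fin]; omega)
  choose j₁ hj₁ using fun e : {e // e ∈ ρ} => hheads (.inl e) (by simp [e.2])
  choose j₂ hj₂ using fun i : Fin w => hheads (.inr i) (by simp)
  have hsame : ∀ {j j' x}, x ∈ (P j).filterMap Sum.getLeft? →
      x ∈ (P j').filterMap Sum.getLeft? → (P j).head? = (P j').head? := fun hx hx' => by
    by_contra hne
    exact hdisj (fun h => hne (congrArg (fun j => (P j).head?) h))
      (List.mem_filterMap_getLeft?.mp hx) (List.mem_filterMap_getLeft?.mp hx')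
  refine ⟨fun e => (P (j₁ e)).filterMap Sum.getLeft?,
    fun i => (P (j₂ i)).filterMap Sum.getLeft?,
    fun e => ?_, fun i => Network.isPathBetween_of_ext_inr hst (hP _) (hj₂ i), ?_, ?_, ?_⟩
  · obtain ⟨hpath, hhead⟩ := Network.isPathBetween_of_ext_inl (hP _) (hj₁ e)
    exact ⟨hpath.1, hhead, hpath.2.2⟩
  · intro e e' hne x hx hx'
    simpa [hj₁, hne] using hsame hx hx'
  · intro i i' hne x hx hx'
    simpa [hj₂, hne] using hsame hx hx'
  · intro e i x hx hx'
    simpa [hj₁, hj₂] using hsame hx hx'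

theorem statement4 (G : Network) (t : G.V) (ht : t ∈ G.T) (w : ℕ)
    (hw1 : 1 ≤ w) (hwC : w ≤ G.minCut t)
    (ρ : Finset G.E) (hρ : ρ ∈ G.R t (G.minCut t - w)) :
    ∃ (P1 : {e : G.E // e ∈ ρ} → List G.E) (P2 : Fin w → List G.E),
      (∀ e, ChainsTo G.tl G.hd (P1 e) ∧ (P1 e).head? = some e.1 ∧
        ∃ e' ∈ (P1 e).getLast?, G.hd e' = t) ∧
      (∀ j, IsPathBetween G.tl G.hd G.s t (P2 j)) ∧
      (∀ e e', e ≠ e' → ∀ x ∈ P1 e, x ∉ P1 e') ∧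
      (∀ j j', j ≠ j' → ∀ x ∈ P2 j, x ∉ P2 j') ∧
      (∀ e j, ∀ x ∈ P1 e, x ∉ P2 j) :=
  statement4_general G t ht w hwC ρ hρ
end

section
/- Let G be a network and t a sink node. For all nonnegative integers β and δ with β ≤ δ ≤ ⌊C_t/2⌋, one has |R_t(β)| ≤ |R_t(δ)|. -/
open scoped BigOperators

/-!
The rank `rank_t` is submodular on error patterns. A minimum cut `C` for `ρ` is replaced by the
set `W` of channels all of whose paths to `t` meet `C`; the "frontier" of `W` (its channels with a
path to `t` leaving `W` at once) is again a cut, no larger than `C`, and frontiers of such sets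
uncross: `|∂(W₁ ∪ W₂)| + |∂(W₁ ∩ W₂)| ≤ |∂W₁| + |∂W₂|`.

Let `ρ ∈ R_t(m)`. By submodularity, the channels of `In(t)` whose addition to `ρ` does not raise
the rank, together with `In(t) ∩ ρ`, have rank at most `m`; being incoming channels of `t` their
rank is their number. Hence at least `|In(t)| - m ≥ C_t - m ≥ m + 1` channels `e` give
`ρ ∪ {e} ∈ R_t(m + 1)`, while each member of `R_t(m + 1)` has only `m + 1` subsets of size `m`.
Double counting gives `|R_t(m)| ≤ |R_t(m + 1)|` whenever `2m + 1 ≤ C_t`.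
-/

namespace List

variable {α : Type*} {P : α → Prop}

theorem exists_split_first : ∀ l : List α, (∃ x ∈ l, P x) →
    ∃ q d r, l = q ++ d :: r ∧ P d ∧ ∀ x ∈ q, ¬ P x
  | [], h => by simp at h
  | a :: l, h => by
    by_cases ha : P a
    · exact ⟨[], a, l, rfl, ha, by simp⟩
    · obtain ⟨q, d, r, rfl, hd, hq⟩ := exists_split_first l (by simpa [ha] using h)
      exact ⟨a :: q, d, r, rfl, hd, by simpa [ha] using hq⟩

theorem exists_split_last (l : List α) (h : ∃ x ∈ l, P x) :
    ∃ q d r, l = q ++ d :: r ∧ P d ∧ ∀ x ∈ r, ¬ P x := by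
  obtain ⟨q, d, r, hl, hd, hq⟩ := exists_split_first l.reverse (by simpa using h)
  refine ⟨r.reverse, d, q.reverse, ?_, hd, by simpa using hq⟩
  rw [← List.reverse_reverse l, hl]
  simp

end List

theorem chainsTo_iff {E V : Type} {tl hd : E → V} {p : List E} :
    ChainsTo tl hd p ↔ p.IsChain (fun a b => hd a = tl b) :=
  Iff.rfl

namespace Network

variable (G : Network)

-- `e :: p` (not `p`) is the path: it starts with the channel `e` and ends at the node `t`.
def IsPathFromTo (e : G.E) (t : G.V) (p : List G.E) : Prop :=
  ChainsTo G.tl G.hd (e :: p) ∧ ∃ l ∈ (e :: p).getLast?, G.hd l = t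

open scoped Classical in
noncomputable def blocked (t : G.V) (C : Finset G.E) : Finset G.E :=
  Finset.univ.filter fun d => ∀ p, G.IsPathFromTo d t p → ∃ c ∈ d :: p, c ∈ C

variable {G} {t : G.V}

theorem mem_blocked {C : Finset G.E} {d : G.E} :
    d ∈ G.blocked t C ↔ ∀ p, G.IsPathFromTo d t p → ∃ c ∈ d :: p, c ∈ C := by
  simp [blocked]

theorem subset_blocked (C : Finset G.E) : C ⊆ G.blocked t C :=
  fun d hd => mem_blocked.2 fun _ _ => ⟨d, List.mem_cons_self, hd⟩

theorem IsPathFromTo.drop {e d : G.E} {p q r : List G.E} (h : G.IsPathFromTo e t p)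
    (hp : e :: p = q ++ d :: r) : G.IsPathFromTo d t r := by
  obtain ⟨hc, hl⟩ := h
  rw [hp, List.getLast?_append_of_ne_nil _ (List.cons_ne_nil _ _)] at hl
  rw [hp, chainsTo_iff, List.isChain_append] at hc
  exact ⟨hc.2.1, hl⟩

theorem IsPathFromTo.splice {d x : G.E} {q₁ q₂ r : List G.E}
    (h : G.IsPathFromTo d t (q₁ ++ x :: q₂)) (hx : G.IsPathFromTo x t r) :
    G.IsPathFromTo d t (q₁ ++ x :: r) := by
  obtain ⟨hc, -⟩ := h
  rw [← List.cons_append, chainsTo_iff, List.isChain_append] at hc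
  refine ⟨?_, ?_⟩
  · rw [← List.cons_append, chainsTo_iff, List.isChain_append]
    exact ⟨hc.1, hx.1, hc.2.2⟩
  · rw [← List.cons_append, List.getLast?_append_of_ne_nil _ (List.cons_ne_nil _ _)]
    exact hx.2

theorem isCut_iff_subset_blocked (ρ C : Finset G.E) :
    IsCut (fun e => if e ∈ ρ then (none : Option G.V) else some (G.tl e))
      (fun e => some (G.hd e)) none (some t) C ↔ ρ ⊆ G.blocked t C := by
  constructor
  · intro hcut e he
    refine mem_blocked.2 fun p hp => ?_
    -- after its last channel `d ∈ ρ`, a path is a path from `s_ρ` in the modified network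
    obtain ⟨q, d, r, hqdr, hd, hr⟩ :=
      List.exists_split_last (P := (· ∈ ρ)) (e :: p) ⟨e, List.mem_cons_self, he⟩
    have hdr := hp.drop hqdr
    have hpath : IsPathBetween (fun e => if e ∈ ρ then (none : Option G.V) else some (G.tl e))
        (fun e => some (G.hd e)) none (some t) (d :: r) := by
      obtain ⟨hc, l, hl, hlt⟩ := hdr
      refine ⟨hc.imp_of_mem_tail_imp fun a b _ hb hab => ?_, ⟨d, rfl, by simp [hd]⟩, l, hl,
        by simp [hlt]⟩
      simp [hr b hb, hab]
    obtain ⟨c, hc, hcC⟩ := hcut (d :: r) hpath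
    exact ⟨c, hqdr ▸ List.mem_append_right q hc, hcC⟩
  · rintro hsub p ⟨hc, ⟨e, he, hte⟩, l, hl, hlt⟩
    have heρ : e ∈ ρ := by
      by_contra h
      simp [h] at hte
    obtain ⟨p, rfl⟩ := List.head?_eq_some_iff.1 he
    refine mem_blocked.1 (hsub heρ) p ⟨?_, l, hl, by simpa using hlt⟩
    refine hc.imp_of_mem_tail_imp fun a b _ _ hab => ?_
    by_cases hb : b ∈ ρ <;> simp_all

variable (G) in
def incoming (t : G.V) : Finset G.E :=
  Finset.univ.filter fun e => G.hd e = t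

theorem blocked_mono {C D : Finset G.E} (h : C ⊆ D) : G.blocked t C ⊆ G.blocked t D := by
  intro d hd
  refine mem_blocked.2 fun p hp => ?_
  obtain ⟨c, hc, hcC⟩ := mem_blocked.1 hd p hp
  exact ⟨c, hc, h hcC⟩

theorem rankOf_eq_sInf (ρ : Finset G.E) :
    G.rankOf t ρ = sInf {n | ∃ C : Finset G.E, ρ ⊆ G.blocked t C ∧ C.card = n} := by
  simp only [rankOf, minCutGen, isCut_iff_subset_blocked]

theorem rankOf_le_card {ρ C : Finset G.E} (h : ρ ⊆ G.blocked t C) :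
    G.rankOf t ρ ≤ C.card := by
  rw [rankOf_eq_sInf]
  exact Nat.sInf_le ⟨C, h, rfl⟩

theorem exists_subset_blocked_card_eq_rankOf (ρ : Finset G.E) :
    ∃ C, ρ ⊆ G.blocked t C ∧ C.card = G.rankOf t ρ := by
  rw [rankOf_eq_sInf]
  exact Nat.sInf_mem (s := {n | ∃ C : Finset G.E, ρ ⊆ G.blocked t C ∧ C.card = n})
    ⟨_, Finset.univ, fun _ _ => subset_blocked _ (Finset.mem_univ _), rfl⟩

theorem rankOf_mono : Monotone (G.rankOf t) := by
  intro ρ σ h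
  obtain ⟨C, hC, hcard⟩ := exists_subset_blocked_card_eq_rankOf (t := t) σ
  exact hcard ▸ rankOf_le_card (h.trans hC)

theorem rankOf_insert_le (ρ : Finset G.E) (e : G.E) :
    G.rankOf t (insert e ρ) ≤ G.rankOf t ρ + 1 := by
  obtain ⟨C, hC, hcard⟩ := exists_subset_blocked_card_eq_rankOf (t := t) ρ
  have hcut : insert e ρ ⊆ G.blocked t (insert e C) :=
    Finset.insert_subset (subset_blocked _ (Finset.mem_insert_self e C))
      (hC.trans (blocked_mono (Finset.subset_insert e C)))
  calc G.rankOf t (insert e ρ) ≤ (insert e C).card := rankOf_le_card hcut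
    _ ≤ G.rankOf t ρ + 1 := hcard ▸ Finset.card_insert_le e C

theorem rankOf_eq_card_of_subset_incoming {S : Finset G.E} (hS : S ⊆ G.incoming t) :
    G.rankOf t S = S.card := by
  refine le_antisymm (rankOf_le_card (subset_blocked S)) ?_
  obtain ⟨C, hC, hcard⟩ := exists_subset_blocked_card_eq_rankOf (t := t) S
  refine hcard ▸ Finset.card_le_card fun e he => ?_
  have hpath : G.IsPathFromTo e t [] := ⟨List.isChain_singleton e, e, rfl, by
    simpa [incoming] using hS he⟩
  simpa using mem_blocked.1 (hC he) [] hpath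

theorem minCut_le_card_incoming : G.minCut t ≤ (G.incoming t).card := by
  unfold minCut minCutGen
  refine Nat.sInf_le ⟨_, fun p hp => ?_, rfl⟩
  obtain ⟨l, hl, hlt⟩ := hp.2.2
  exact ⟨l, List.mem_of_mem_getLast? hl, by simpa [incoming] using hlt⟩

variable (G) in
open scoped Classical in
noncomputable def frontier (t : G.V) (W : Finset G.E) : Finset G.E :=
  W.filter fun d => ∃ p, G.IsPathFromTo d t p ∧ ∀ x ∈ p, x ∉ W

variable (G) in
def IsSaturated (t : G.V) (W : Finset G.E) : Prop :=
  ∀ d ∉ W, ∃ p, G.IsPathFromTo d t p ∧ ∀ x ∈ d :: p, x ∉ W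

theorem mem_frontier {W : Finset G.E} {d : G.E} :
    d ∈ G.frontier t W ↔ d ∈ W ∧ ∃ p, G.IsPathFromTo d t p ∧ ∀ x ∈ p, x ∉ W := by
  simp [frontier]

theorem subset_blocked_frontier (W : Finset G.E) : W ⊆ G.blocked t (G.frontier t W) := by
  intro e he
  refine mem_blocked.2 fun p hp => ?_
  obtain ⟨q, d, r, hqdr, hd, hr⟩ :=
    List.exists_split_last (P := (· ∈ W)) (e :: p) ⟨e, List.mem_cons_self, he⟩
  exact ⟨d, hqdr ▸ List.mem_append_right q List.mem_cons_self,
    mem_frontier.2 ⟨hd, r, hp.drop hqdr, hr⟩⟩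

theorem frontier_blocked_subset (C : Finset G.E) : G.frontier t (G.blocked t C) ⊆ C := by
  intro d hd
  obtain ⟨hdC, p, hp, hpC⟩ := mem_frontier.1 hd
  obtain ⟨c, hc, hcC⟩ := mem_blocked.1 hdC p hp
  rcases List.mem_cons.1 hc with rfl | hc
  · exact hcC
  · exact absurd (subset_blocked C hcC) (hpC c hc)

theorem isSaturated_blocked (C : Finset G.E) : G.IsSaturated t (G.blocked t C) := by
  intro d hd
  obtain ⟨p, hp, hpC⟩ : ∃ p, G.IsPathFromTo d t p ∧ ∀ c ∈ d :: p, c ∉ C := by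
    simpa [mem_blocked] using hd
  refine ⟨p, hp, fun x hx hxC => ?_⟩
  obtain ⟨q, r, hqr⟩ := List.append_of_mem hx
  obtain ⟨c, hc, hcC⟩ := mem_blocked.1 hxC r (hp.drop hqr)
  exact hpC c (hqr ▸ List.mem_append_right q hc) hcC

/-- The path is rerouted after `x` along a path avoiding `W`, which exists by saturation. -/
theorem mem_frontier_of_isSaturated {W : Finset G.E} (hW : G.IsSaturated t W) {d x : G.E}
    {q₁ q₂ : List G.E} (hd : d ∈ W) (hp : G.IsPathFromTo d t (q₁ ++ x :: q₂))
    (hq₁ : ∀ y ∈ q₁, y ∉ W) (hx : x ∉ W) : d ∈ G.frontier t W := by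
  obtain ⟨r, hr, hrW⟩ := hW x hx
  refine mem_frontier.2 ⟨hd, q₁ ++ x :: r, hp.splice hr, fun y hy => ?_⟩
  rcases List.mem_append.1 hy with hy | hy
  · exact hq₁ y hy
  · exact hrW y hy

theorem frontier_union_subset (W₁ W₂ : Finset G.E) :
    G.frontier t (W₁ ∪ W₂) ⊆ G.frontier t W₁ ∪ G.frontier t W₂ := by
  intro d hd
  obtain ⟨hdW, p, hp, hpW⟩ := mem_frontier.1 hd
  rcases Finset.mem_union.1 hdW with h | h
  · refine Finset.mem_union_left _ (mem_frontier.2 ⟨h, p, hp, fun x hx h' => ?_⟩)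
    exact hpW x hx (Finset.mem_union_left _ h')
  · refine Finset.mem_union_right _ (mem_frontier.2 ⟨h, p, hp, fun x hx h' => ?_⟩)
    exact hpW x hx (Finset.mem_union_right _ h')

theorem frontier_inter_subset {W₁ W₂ : Finset G.E} (h₁ : G.IsSaturated t W₁)
    (h₂ : G.IsSaturated t W₂) :
    G.frontier t (W₁ ∩ W₂) ⊆ G.frontier t W₁ ∪ G.frontier t W₂ := by
  intro d hd
  obtain ⟨hdW, p, hp, hpW⟩ := mem_frontier.1 hd
  obtain ⟨hd₁, hd₂⟩ := Finset.mem_inter.1 hdW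
  by_cases hp₁ : ∀ x ∈ p, x ∉ W₁
  · exact Finset.mem_union_left _ (mem_frontier.2 ⟨hd₁, p, hp, hp₁⟩)
  push Not at hp₁
  -- the first channel of `p` in `W₁ ∪ W₂` misses one of them; its frontier then contains `d`
  obtain ⟨q₁, x, q₂, rfl, hx, hq₁⟩ :=
    List.exists_split_first (P := (· ∈ W₁ ∪ W₂)) p
    (hp₁.imp fun x hx => ⟨hx.1, Finset.mem_union_left _ hx.2⟩)
  have hxW : x ∉ W₁ ∩ W₂ := hpW x (List.mem_append_right q₁ List.mem_cons_self)
  rcases Finset.mem_union.1 hx with hx₁ | hx₂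
  · exact Finset.mem_union_right _ (mem_frontier_of_isSaturated h₂ hd₂ hp
      (fun y hy h' => hq₁ y hy (Finset.mem_union_right _ h'))
      fun h' => hxW (Finset.mem_inter.2 ⟨hx₁, h'⟩))
  · exact Finset.mem_union_left _ (mem_frontier_of_isSaturated h₁ hd₁ hp
      (fun y hy h' => hq₁ y hy (Finset.mem_union_left _ h'))
      fun h' => hxW (Finset.mem_inter.2 ⟨h', hx₂⟩))

theorem frontier_union_inter_frontier_inter_subset (W₁ W₂ : Finset G.E) :
    G.frontier t (W₁ ∪ W₂) ∩ G.frontier t (W₁ ∩ W₂) ⊆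
      G.frontier t W₁ ∩ G.frontier t W₂ := by
  intro d hd
  obtain ⟨hdU, hdI⟩ := Finset.mem_inter.1 hd
  obtain ⟨-, p, hp, hpW⟩ := mem_frontier.1 hdU
  obtain ⟨hd₁, hd₂⟩ := Finset.mem_inter.1 (mem_frontier.1 hdI).1
  exact Finset.mem_inter.2
    ⟨mem_frontier.2 ⟨hd₁, p, hp, fun x hx h' => hpW x hx (Finset.mem_union_left _ h')⟩,
      mem_frontier.2 ⟨hd₂, p, hp, fun x hx h' => hpW x hx (Finset.mem_union_right _ h')⟩⟩

theorem card_frontier_union_add_card_frontier_inter_le {W₁ W₂ : Finset G.E}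
    (h₁ : G.IsSaturated t W₁) (h₂ : G.IsSaturated t W₂) :
    (G.frontier t (W₁ ∪ W₂)).card + (G.frontier t (W₁ ∩ W₂)).card ≤
      (G.frontier t W₁).card + (G.frontier t W₂).card := by
  rw [← Finset.card_union_add_card_inter,
    ← Finset.card_union_add_card_inter (G.frontier t W₁)]
  exact add_le_add
    (Finset.card_le_card (Finset.union_subset (frontier_union_subset W₁ W₂)
      (frontier_inter_subset h₁ h₂)))
    (Finset.card_le_card (frontier_union_inter_frontier_inter_subset W₁ W₂))

theorem rankOf_union_add_rankOf_inter_le (A B : Finset G.E) :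
    G.rankOf t (A ∪ B) + G.rankOf t (A ∩ B) ≤ G.rankOf t A + G.rankOf t B := by
  obtain ⟨C, hAC, hC⟩ := exists_subset_blocked_card_eq_rankOf (t := t) A
  obtain ⟨D, hBD, hD⟩ := exists_subset_blocked_card_eq_rankOf (t := t) B
  set W₁ := G.blocked t C
  set W₂ := G.blocked t D
  calc G.rankOf t (A ∪ B) + G.rankOf t (A ∩ B)
      ≤ (G.frontier t (W₁ ∪ W₂)).card + (G.frontier t (W₁ ∩ W₂)).card :=
        add_le_add
          (rankOf_le_card ((Finset.union_subset_union hAC hBD).trans (subset_blocked_frontier _)))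
          (rankOf_le_card ((Finset.inter_subset_inter hAC hBD).trans (subset_blocked_frontier _)))
    _ ≤ (G.frontier t W₁).card + (G.frontier t W₂).card :=
        card_frontier_union_add_card_frontier_inter_le (isSaturated_blocked C)
          (isSaturated_blocked D)
    _ ≤ C.card + D.card :=
        add_le_add (Finset.card_le_card (frontier_blocked_subset C))
          (Finset.card_le_card (frontier_blocked_subset D))
    _ = G.rankOf t A + G.rankOf t B := by rw [hC, hD]

theorem rankOf_union_eq_of_forall_rankOf_insert {ρ S : Finset G.E}
    (h : ∀ e ∈ S, G.rankOf t (insert e ρ) = G.rankOf t ρ) :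
    G.rankOf t (ρ ∪ S) = G.rankOf t ρ := by
  induction S using Finset.induction_on with
  | empty => simp
  | insert a S _ ih =>
    have hS := ih fun e he => h e (Finset.mem_insert_of_mem he)
    have hsub := rankOf_union_add_rankOf_inter_le (t := t) (ρ ∪ S) (insert a ρ)
    have hρ : ρ ⊆ (ρ ∪ S) ∩ insert a ρ :=
      Finset.subset_inter Finset.subset_union_left (Finset.subset_insert a ρ)
    have hU : ρ ∪ S ∪ insert a ρ = ρ ∪ insert a S := by
      ext
      simp only [Finset.mem_union, Finset.mem_insert]
      tauto
    rw [hU, hS, h a (Finset.mem_insert_self a S)] at hsub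
    have := rankOf_mono (t := t) hρ
    have := rankOf_mono (t := t) (Finset.subset_union_left : ρ ⊆ ρ ∪ insert a S)
    omega

theorem card_incoming_le_rankOf_add_card_filter (ρ : Finset G.E) :
    (G.incoming t).card ≤ G.rankOf t ρ +
      ((G.incoming t \ ρ).filter fun e => G.rankOf t ρ < G.rankOf t (insert e ρ)).card := by
  set bad := (G.incoming t \ ρ).filter fun e => ¬ G.rankOf t ρ < G.rankOf t (insert e ρ)
  have hbad : G.rankOf t (ρ ∪ bad) = G.rankOf t ρ :=
    rankOf_union_eq_of_forall_rankOf_insert fun e he =>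
      le_antisymm (not_lt.1 (Finset.mem_filter.1 he).2) (rankOf_mono (Finset.subset_insert e ρ))
  have hdisj : Disjoint (G.incoming t ∩ ρ) bad :=
    Finset.disjoint_left.2 fun e he hb =>
      (Finset.mem_sdiff.1 (Finset.mem_filter.1 hb).1).2 (Finset.mem_inter.1 he).2
  have hsub : G.incoming t ∩ ρ ∪ bad ⊆ G.incoming t :=
    Finset.union_subset Finset.inter_subset_left
      ((Finset.filter_subset _ _).trans Finset.sdiff_subset)
  have hle : (G.incoming t ∩ ρ).card + bad.card ≤ G.rankOf t ρ := by
    rw [← Finset.card_union_of_disjoint hdisj, ← rankOf_eq_card_of_subset_incoming hsub,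
      ← hbad]
    exact rankOf_mono (Finset.union_subset_union Finset.inter_subset_right le_rfl)
  have hsplit : ((G.incoming t \ ρ).filter fun e => G.rankOf t ρ < G.rankOf t (insert e ρ)).card
      + bad.card = (G.incoming t \ ρ).card :=
    Finset.card_filter_add_card_filter_not _
  have hcard := Finset.card_sdiff_add_card_inter (G.incoming t) ρ
  omega

theorem le_card_bipartiteAbove_R_succ {m : ℕ} (hm : 2 * m + 1 ≤ (G.incoming t).card)
    {ρ : Finset G.E} (hρ : ρ ∈ G.R t m) :
    m + 1 ≤ ((Set.toFinite (G.R t (m + 1))).toFinset.bipartiteAbove (· ⊆ ·) ρ).card := by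
  obtain ⟨hcard, hrank⟩ := hρ
  have hgood := card_incoming_le_rankOf_add_card_filter (t := t) ρ
  set good := (G.incoming t \ ρ).filter fun e => G.rankOf t ρ < G.rankOf t (insert e ρ)
  have hnot : ∀ e ∈ good, e ∉ ρ :=
    fun e he => (Finset.mem_sdiff.1 (Finset.mem_filter.1 he).1).2
  calc m + 1 ≤ good.card := by omega
    _ ≤ _ := by
      refine Finset.card_le_card_of_injOn (insert · ρ) (fun e he => ?_)
        fun e he e' _ hee' => (Finset.insert_inj (hnot e he)).1 hee'
      have hlt := (Finset.mem_filter.1 he).2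
      have hle := rankOf_insert_le (t := t) ρ e
      simp only [Finset.mem_coe, Finset.mem_bipartiteAbove, Set.Finite.mem_toFinset]
      refine ⟨⟨?_, by omega⟩, Finset.subset_insert e ρ⟩
      rw [Finset.card_insert_of_notMem (hnot e he), hcard]

theorem card_bipartiteBelow_R_le {m : ℕ} {σ : Finset G.E} (hσ : σ ∈ G.R t (m + 1)) :
    ((Set.toFinite (G.R t m)).toFinset.bipartiteBelow (· ⊆ ·) σ).card ≤ m + 1 := by
  calc _ ≤ (σ.powersetCard m).card := Finset.card_le_card fun ρ hρ => by
        simp only [Finset.mem_bipartiteBelow, Set.Finite.mem_toFinset] at hρ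
        exact Finset.mem_powersetCard.2 ⟨hρ.2, hρ.1.1⟩
    _ = m + 1 := by rw [Finset.card_powersetCard, hσ.1, Nat.choose_succ_self_right]

theorem ncard_R_le_ncard_R_succ {m : ℕ} (hm : 2 * m + 1 ≤ (G.incoming t).card) :
    (G.R t m).ncard ≤ (G.R t (m + 1)).ncard := by
  rw [Set.ncard_eq_toFinset_card _ (Set.toFinite _), Set.ncard_eq_toFinset_card _ (Set.toFinite _)]
  refine le_of_mul_le_mul_right (Finset.card_mul_le_card_mul (· ⊆ ·) ?_ ?_) m.succ_pos
  · exact fun ρ hρ => le_card_bipartiteAbove_R_succ hm ((Set.Finite.mem_toFinset _).1 hρ)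
  · exact fun σ hσ => card_bipartiteBelow_R_le ((Set.Finite.mem_toFinset _).1 hσ)

end Network

theorem statement9_general (G : Network) (t : G.V) (β δ : ℕ)
    (h1 : β ≤ δ) (h2 : δ ≤ G.minCut t / 2) :
    (G.R t β).ncard ≤ (G.R t δ).ncard := by
  have hstep (m : ℕ) (hm : m + 1 ≤ G.minCut t / 2) :
      (G.R t m).ncard ≤ (G.R t (m + 1)).ncard := by
    have := Network.minCut_le_card_incoming (G := G) (t := t)
    exact Network.ncard_R_le_ncard_R_succ (by omega)
  have hmono : MonotoneOn (fun b => (G.R t b).ncard) (Set.Iic (G.minCut t / 2)) :=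
    monotoneOn_of_le_succ Set.ordConnected_Iic fun m _ _ hm => by
      rw [Order.succ_eq_add_one] at hm ⊢
      exact hstep m hm
  exact hmono (h1.trans h2) h2 h1

theorem statement9 (G : Network) (t : G.V) (ht : t ∈ G.T) (β δ : ℕ)
    (h1 : β ≤ δ) (h2 : δ ≤ G.minCut t / 2) :
    (G.R t β).ncard ≤ (G.R t δ).ncard :=
  statement9_general G t β δ h1 h2
end

section
/- For all natural numbers β, δ, k, C with β ≤ δ, 2δ ≤ C, and k ≤ C, one has C(C,δ) + C(k,β) ≥ C(C,β) + C(k,δ); equivalently, C(C,δ) − C(k,δ) ≥ C(C,β) − C(k,β) as integers. -/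
/-!
The integer sequence `j ↦ C(C, j) - C(k, j)` is nondecreasing while `2 j ≤ C`. Multiplying the
step from `j` to `j + 1` by `j + 1` and using `(j + 1) C(n, j + 1) = (n - j) C(n, j)`, it becomes
`C(k, j) (k - 2j - 1) ≤ C(C, j) (C - 2j - 1)`: the left side is nonpositive when `k ≤ 2j + 1`,
and otherwise both factors on the left are dominated by those on the right.
-/

open Nat

-- Unlike `Nat.choose_succ_right_eq`, the factor `n - j` is a ring subtraction; both sides vanish
-- when `n < j`.
theorem Nat.cast_choose_succ_right_eq {R : Type*} [CommRing R] (n j : ℕ) :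
    (n.choose (j + 1) : R) * (j + 1) = n.choose j * (n - j) := by
  rcases le_or_gt j n with hjn | hnj
  · rw [← Nat.cast_sub hjn]
    exact_mod_cast congrArg (Nat.cast (R := R)) (choose_succ_right_eq n j)
  · simp [choose_eq_zero_of_lt hnj, choose_eq_zero_of_lt (hnj.trans (lt_succ_self j))]

theorem choose_mul_sub_le_choose_mul_sub {j k C : ℕ} (hC : 2 * j + 2 ≤ C) (hk : k ≤ C) :
    (k.choose j : ℤ) * (k - 2 * j - 1) ≤ C.choose j * (C - 2 * j - 1) := by
  have hC' : (0 : ℤ) ≤ C - 2 * j - 1 := by omega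
  rcases le_or_gt (k : ℤ) (2 * j + 1) with hsmall | hlarge
  · calc (k.choose j : ℤ) * (k - 2 * j - 1) ≤ 0 :=
          mul_nonpos_of_nonneg_of_nonpos (by positivity) (by linarith)
      _ ≤ C.choose j * (C - 2 * j - 1) := mul_nonneg (by positivity) hC'
  · exact mul_le_mul (by exact_mod_cast choose_le_choose j hk) (by omega) (by omega)
      (by positivity)

theorem choose_sub_choose_le_succ {j k C : ℕ} (hC : 2 * j + 2 ≤ C) (hk : k ≤ C) :
    (C.choose j : ℤ) - k.choose j ≤ C.choose (j + 1) - k.choose (j + 1) := by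
  refine le_of_mul_le_mul_right ?_ (by positivity : (0 : ℤ) < j + 1)
  have hCj := Nat.cast_choose_succ_right_eq (R := ℤ) C j
  have hkj := Nat.cast_choose_succ_right_eq (R := ℤ) k j
  linear_combination choose_mul_sub_le_choose_mul_sub hC hk - hCj + hkj

theorem monotoneOn_choose_sub_choose {k C : ℕ} (hk : k ≤ C) :
    MonotoneOn (fun j => (C.choose j : ℤ) - k.choose j) (Set.Iic (C / 2)) :=
  monotoneOn_of_le_add_one Set.ordConnected_Iic fun _ _ _ hj1 =>
    choose_sub_choose_le_succ (by simp only [Set.mem_Iic] at hj1; omega) hk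

theorem statement10 (β δ k C : ℕ) (h1 : β ≤ δ) (h2 : 2 * δ ≤ C) (h3 : k ≤ C) :
    Nat.choose C β + Nat.choose k δ ≤ Nat.choose C δ + Nat.choose k β ∧
    (Nat.choose C β : ℤ) - Nat.choose k β ≤ (Nat.choose C δ : ℤ) - Nat.choose k δ := by
  have hδ : δ ∈ Set.Iic (C / 2) := by simp only [Set.mem_Iic]; omega
  have hβ : β ∈ Set.Iic (C / 2) := Set.mem_Iic.2 (h1.trans hδ)
  have hint : (C.choose β : ℤ) - k.choose β ≤ (C.choose δ : ℤ) - k.choose δ :=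
    monotoneOn_choose_sub_choose h3 hβ hδ h1
  exact ⟨by omega, hint⟩
end

section
/- For all natural numbers a, k, C with k ≤ C and 2(a+1) ≤ C, one has C(C,a+1) + C(k,a) ≥ C(C,a) + C(k,a+1); equivalently, C(C,a+1) − C(C,a) ≥ C(k,a+1) − C(k,a) as integers. -/
/-!
Let `Δ n = C(n, a+1) - C(n, a)`. Pascal's rule gives `Δ (n+1) - Δ n = 2 C(n, a) - C(n+1, a)`, which is
nonnegative as soon as `2a ≤ n + 1`; so `Δ` is nondecreasing from `n = 2a - 1` on, and it vanishes at
`n = 2a + 1` by symmetry. For `n ≤ 2a + 1` the row `C(n, ·)` is already decreasing at `a`, so `Δ n ≤ 0`.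
Hence `Δ k ≤ Δ C` both when `k ≤ 2a + 1` (through `Δ k ≤ 0 = Δ (2a+1)`) and when `k > 2a + 1`.
-/

namespace Nat

theorem choose_succ_le_two_mul_choose {n a : ℕ} (h : 2 * a ≤ n + 1) :
    (n + 1).choose a ≤ 2 * n.choose a := by
  refine Nat.le_of_mul_le_mul_right ?_ (show 0 < n + 1 - a by omega)
  calc (n + 1).choose a * (n + 1 - a) = n.choose a * (n + 1) := (choose_mul_succ_eq n a).symm
    _ ≤ n.choose a * (2 * (n + 1 - a)) := Nat.mul_le_mul_left _ (by omega)
    _ = 2 * n.choose a * (n + 1 - a) := by ring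

theorem choose_succ_le_choose {n a : ℕ} (h : n ≤ 2 * a + 1) : n.choose (a + 1) ≤ n.choose a := by
  refine Nat.le_of_mul_le_mul_right ?_ (succ_pos a)
  calc n.choose (a + 1) * (a + 1) = n.choose a * (n - a) := choose_succ_right_eq n a
    _ ≤ n.choose a * (a + 1) := Nat.mul_le_mul_left _ (by omega)

theorem monotoneOn_choose_succ_sub_choose (a : ℕ) :
    MonotoneOn (fun n : ℕ => (n.choose (a + 1) : ℤ) - n.choose a) (Set.Ici (2 * a - 1)) := by
  refine monotoneOn_nat_Ici_of_le_succ fun n hn => ?_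
  have hstep : (n + 1).choose a ≤ 2 * n.choose a := choose_succ_le_two_mul_choose (by omega)
  have hpascal := choose_succ_succ' n a
  push_cast [hpascal] at hstep ⊢
  linarith

end Nat

theorem statement11 (a k C : ℕ) (h1 : k ≤ C) (h2 : 2 * (a + 1) ≤ C) :
    Nat.choose C a + Nat.choose k (a + 1) ≤ Nat.choose C (a + 1) + Nat.choose k a ∧
    (Nat.choose k (a + 1) : ℤ) - Nat.choose k a
      ≤ (Nat.choose C (a + 1) : ℤ) - Nat.choose C a := by
  have hmono := Nat.monotoneOn_choose_succ_sub_choose a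
  have hC : C ∈ Set.Ici (2 * a - 1) := Set.mem_Ici.2 (by omega)
  have key : (k.choose (a + 1) : ℤ) - k.choose a ≤ (C.choose (a + 1) : ℤ) - C.choose a := by
    rcases le_or_gt k (2 * a + 1) with hk | hk
    · calc (k.choose (a + 1) : ℤ) - k.choose a
          ≤ 0 := by have := Nat.choose_succ_le_choose hk; omega
        _ = ((2 * a + 1).choose (a + 1) : ℤ) - (2 * a + 1).choose a := by
          rw [Nat.choose_symm_half, sub_self]
        _ ≤ (C.choose (a + 1) : ℤ) - C.choose a :=
          hmono (Set.mem_Ici.2 (by omega)) hC (by omega)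
    · exact hmono (Set.mem_Ici.2 (by omega)) hC h1
  exact ⟨by omega, key⟩
end

section
/- Let F be a finite field and L an n-dimensional vector space over F. Let L_0 and L_1 be subspaces of L of dimensions k_0 and k_1 respectively with L_0 + L_1 = L, and let m = n − k_0. Then the number of m-tuples (l_1, l_2, ..., l_m) ∈ L_1^m such that L_0 + span{l_1, ..., l_m} = L equals Π_{i=1}^{m} (|F|^{k_1} − |F|^{k_1−i}). Equivalently, if l_1, ..., l_m are independently and uniformly distributed random vectors taking values in L_1, then Pr(dim span(L_0 ∪ {l_1, ..., l_m}) = n) = Π_{i=1}^{m} (1 − |F|^{−i}). -/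
/-!
`L₀ + span{l₁, …, lₘ} = L` says exactly that the images of the `lᵢ` in `L / L₀`, a space of
dimension `m`, are linearly independent. The map `L₁ → L / L₀` is surjective with kernel of
dimension `k₁ - m`, so each of the `∏_{i<m} (qᵐ - qⁱ)` independent `m`-tuples in `L / L₀` lifts to
exactly `q^((k₁ - m) m)` tuples in `L₁ᵐ`, and this product rearranges to
`∏_{i=1}^m (q^k₁ - q^(k₁-i))`.
-/

open Module Finset

theorem LinearMap.natCard_preimage_of_surjective {R M N : Type*} [Ring R] [AddCommGroup M]
    [AddCommGroup N] [Module R M] [Module R N] (f : M →ₗ[R] N) (hf : Function.Surjective f)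
    (S : Set N) : Nat.card (f ⁻¹' S) = Nat.card S * Nat.card (LinearMap.ker f) := by
  let s := Function.surjInv hf
  have hs : ∀ y, f (s y) = y := Function.surjInv_eq hf
  rw [← Nat.card_prod]
  exact Nat.card_congr
    { toFun := fun x => (⟨f x, x.2⟩, ⟨x - s (f x), by simp [hs]⟩)
      invFun := fun p => ⟨p.2 + s p.1, by simp [LinearMap.mem_ker.mp p.2.2, hs, p.1.2]⟩
      left_inv := fun x => Subtype.ext (sub_add_cancel _ _)
      right_inv := fun p => by
        ext <;> simp [LinearMap.mem_ker.mp p.2.2, hs] }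

theorem LinearMap.natCard_ker_compLeft {R M N : Type*} [Semiring R] [AddCommMonoid M]
    [AddCommMonoid N] [Module R M] [Module R N] (f : M →ₗ[R] N) (ι : Type*) [Finite ι] :
    Nat.card (LinearMap.ker (f.compLeft ι)) = Nat.card (LinearMap.ker f) ^ Nat.card ι := by
  rw [← Nat.card_fun]
  exact Nat.card_congr
    ((Equiv.subtypeEquivRight fun l => by simp [funext_iff]).trans
      (Equiv.subtypePiEquivPi (p := fun _ x => f x = 0)))

theorem Submodule.sup_span_range_eq_top_iff_linearIndependent_mkQ {K V ι : Type*} [DivisionRing K]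
    [AddCommGroup V] [Module K V] [FiniteDimensional K V] [Fintype ι] (W : Submodule K V)
    (v : ι → V) (hcard : Fintype.card ι = finrank K (V ⧸ W)) :
    W ⊔ span K (Set.range v) = ⊤ ↔ LinearIndependent K (W.mkQ ∘ v) := by
  rw [← Submodule.map_mkQ_eq_top, Submodule.map_span, ← Set.range_comp]
  exact ⟨fun h => linearIndependent_of_top_le_span_of_card_eq_finrank h.ge hcard,
    fun h => h.span_eq_top_of_card_eq_finrank' hcard⟩

theorem LinearMap.natCard_linearIndependent_comp_of_surjective {K V W : Type*} [DivisionRing K]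
    [Fintype K] [AddCommGroup V] [Module K V] [AddCommGroup W] [Module K W] [Finite W]
    (f : V →ₗ[K] W) (hf : Function.Surjective f) {k : ℕ} (hk : k ≤ finrank K W) :
    Nat.card {l : Fin k → V | LinearIndependent K (f ∘ l)}
      = (∏ i : Fin k, (Fintype.card K ^ finrank K W - Fintype.card K ^ i.val))
        * Nat.card (LinearMap.ker f) ^ k := by
  rw [← card_linearIndependent hk, ← Nat.card_fin k, ← natCard_ker_compLeft, Nat.card_fin,
    ← Set.coe_ofPred, ← natCard_preimage_of_surjective _ hf.comp_left]
  rfl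

theorem prod_Icc_pow_sub_pow_eq (q k m : ℕ) (hmk : m ≤ k) :
    ∏ i ∈ Icc 1 m, (q ^ k - q ^ (k - i))
      = (∏ i ∈ range m, (q ^ m - q ^ i)) * (q ^ (k - m)) ^ m := by
  have hfactor : ∀ i ∈ range m,
      q ^ k - q ^ (k - (1 + i)) = (q ^ m - q ^ (m - 1 - i)) * q ^ (k - m) := by
    intro i hi
    have him : i < m := mem_range.mp hi
    rw [Nat.sub_mul, ← pow_add, ← pow_add]
    congr 2 <;> omega
  rw [← Ico_add_one_right_eq_Icc, prod_Ico_eq_prod_range, Nat.add_sub_cancel,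
    prod_congr rfl hfactor, prod_mul_distrib, prod_const, card_range,
    prod_range_reflect (fun j => q ^ m - q ^ j) m]

theorem cast_prod_Icc_pow_sub_pow_div (q k m : ℕ) (hq : 0 < q) (hmk : m ≤ k) :
    ((∏ i ∈ Icc 1 m, (q ^ k - q ^ (k - i)) : ℕ) : ℝ) / (q : ℝ) ^ (k * m)
      = ∏ i ∈ Icc 1 m, (1 - ((q : ℝ) ^ i)⁻¹) := by
  have hqk : (q : ℝ) ^ k ≠ 0 := by positivity
  have hden : (q : ℝ) ^ (k * m) = ∏ _i ∈ Icc 1 m, (q : ℝ) ^ k := by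
    rw [prod_const, Nat.card_Icc, Nat.add_sub_cancel, pow_mul]
  rw [hden, Nat.cast_prod, ← prod_div_distrib]
  refine prod_congr rfl fun i hi => ?_
  have hik : i ≤ k := (mem_Icc.mp hi).2.trans hmk
  rw [Nat.cast_sub (Nat.pow_le_pow_right hq (Nat.sub_le k i)), sub_div]
  push_cast
  rw [div_self hqk, pow_sub₀ _ (Nat.cast_ne_zero.mpr hq.ne') hik]
  field_simp

theorem statement12 (F : Type*) [Field F] [Fintype F] (L : Type*) [AddCommGroup L]
    [Module F L] [FiniteDimensional F L] (n k0 k1 m : ℕ)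
    (hn : Module.finrank F L = n) (L0 L1 : Submodule F L)
    (hk0 : Module.finrank F ↥L0 = k0) (hk1 : Module.finrank F ↥L1 = k1)
    (hsum : L0 ⊔ L1 = ⊤) (hm : m = n - k0) :
    Set.ncard {l : Fin m → ↥L1 |
        L0 ⊔ Submodule.span F (Set.range fun i => (l i : L)) = ⊤}
      = ∏ i ∈ Finset.Icc 1 m, (Fintype.card F ^ k1 - Fintype.card F ^ (k1 - i))
    ∧ (Set.ncard {l : Fin m → ↥L1 |
          L0 ⊔ Submodule.span F (Set.range fun i => (l i : L)) = ⊤} : ℝ)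
          / (Fintype.card F : ℝ) ^ (k1 * m)
      = ∏ i ∈ Finset.Icc 1 m, (1 - ((Fintype.card F : ℝ) ^ i)⁻¹) := by
  have : Finite (L ⧸ L0) := Module.finite_of_finite F
  let f : L1 →ₗ[F] L ⧸ L0 := L0.mkQ ∘ₗ L1.subtype
  have hf : Function.Surjective f := by
    rw [← LinearMap.range_eq_top, LinearMap.range_comp, Submodule.range_subtype,
      Submodule.map_mkQ_eq_top, hsum]
  have hquot : finrank F (L ⧸ L0) = m := by
    have := L0.finrank_quotient_add_finrank
    have := L0.finrank_le
    omega
  have hker : m + finrank F (LinearMap.ker f) = k1 := by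
    rw [← hquot, ← finrank_top F (L ⧸ L0), ← LinearMap.range_eq_top.mpr hf,
      LinearMap.finrank_range_add_finrank_ker, hk1]
  have hset : {l : Fin m → L1 | L0 ⊔ Submodule.span F (Set.range fun i => (l i : L)) = ⊤}
      = {l | LinearIndependent F (f ∘ l)} :=
    Set.ext fun l => L0.sup_span_range_eq_top_iff_linearIndependent_mkQ _
      (by rw [Fintype.card_fin, hquot])
  have hcount : Set.ncard {l : Fin m → L1 |
      L0 ⊔ Submodule.span F (Set.range fun i => (l i : L)) = ⊤}
      = ∏ i ∈ Finset.Icc 1 m, (Fintype.card F ^ k1 - Fintype.card F ^ (k1 - i)) := by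
    rw [hset, ← Nat.card_coe_set_eq, f.natCard_linearIndependent_comp_of_surjective hf hquot.ge,
      hquot, Module.natCard_eq_pow_finrank (K := F), Nat.card_eq_fintype_card, ← hker,
      prod_Icc_pow_sub_pow_eq _ _ _ (Nat.le_add_right _ _), Nat.add_sub_cancel_left,
      Fin.prod_univ_eq_prod_range (fun i => Fintype.card F ^ m - Fintype.card F ^ i)]
  exact ⟨hcount,
    hcount ▸ cast_prod_Icc_pow_sub_pow_div _ _ _ Fintype.card_pos (hker ▸ Nat.le_add_right _ _)⟩
end
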